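/- arXiv:2410.10692 — 3 statements merged into one kernel-verified Lean document; each statement's English description precedes it below -/
import Mathlib

section
/- Let F : J ⥤ Type be a functor and α : I ⥤ J a lax surjective functor. A compatible family (x_i)_{i ∈ I} ∈ lim (α ⋙ F) lies in the image of the restriction map lim F → lim (α ⋙ F) if and only if for every object j of J, every pair of objects i, i' of I, and every pair of morphisms φ : α(i) ⟶ j and φ' : α(i') ⟶ j, one has F(φ)(x_i) = F(φ')(x_{i'}) in F(j). -/
open CategoryTheory

/-- A compatible family for `α ⋙ F` lies in the image of the restriction map
`lim F → lim (α ⋙ F)` along a lax surjective functor `α` iff for every cone of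
morphisms `φ : α(i) ⟶ j`, `φ' : α(i') ⟶ j`, one has `F(φ)(x_i) = F(φ')(x_{i'})`. -/
theorem sections_restriction_image {I J : Type*} [Category I] [Category J]
    (α : I ⥤ J) (hα : ∀ j : J, ∃ i : I, Nonempty (α.obj i ⟶ j))
    (F : J ⥤ Type*) (x : (α ⋙ F).sections) :
    (∃ y : F.sections, ∀ i : I, y.1 (α.obj i) = x.1 i) ↔
      (∀ (j : J) (i i' : I) (φ : α.obj i ⟶ j) (φ' : α.obj i' ⟶ j),
        F.map φ (x.1 i) = F.map φ' (x.1 i')) := by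
  constructor
  · rintro ⟨y, hy⟩ j i i' φ φ'
    rw [← hy i, ← hy i', y.2 φ, y.2 φ']
  · intro h
    have key : ∀ j : J, ∃ i : I, ∃ _ : α.obj i ⟶ j, True := by
      intro j
      obtain ⟨i, ⟨φ⟩⟩ := hα j
      exact ⟨i, φ, trivial⟩
    choose ι ψ _ using key
    refine ⟨⟨fun j => F.map (ψ j) (x.1 (ι j)), ?_⟩, ?_⟩
    · intro j j' f
      dsimp only
      rw [← FunctorToTypes.map_comp_apply]
      exact h j' _ _ (ψ j ≫ f) (ψ j')
    · intro i
      dsimp only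
      have := h (α.obj i) _ i (ψ (α.obj i)) (𝟙 (α.obj i))
      simpa using this
end

section
/- Let C be a category and F : Tw(C) ⥤ Type a functor on its twisted arrow category. Then the map sending a section (x_f)_{f ∈ Tw(C)} of F to the family (x_{𝟙_c})_{c ∈ C} of its values on identity arrows is injective, and its image consists exactly of those families (y_c ∈ F(𝟙_c))_{c} such that for every morphism f : c ⟶ c' in C, the images of y_c and y_{c'} in F(f) under the structure maps F(𝟙_c ⟶ f) and F(𝟙_{c'} ⟶ f) coincide. -/
open CategoryTheory

universe w v₁ u₁

/-- The twisted arrow category of `C`: objects are morphisms of `C`. -/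
structure Tw (C : Type u₁) [Category.{v₁} C] where
  {left : C}
  {right : C}
  hom : left ⟶ right

namespace Tw

variable {C : Type u₁} [Category.{v₁} C]

/-- A morphism from `f : c ⟶ c'` to `g : d ⟶ d'` in the twisted arrow
category is a pair `(u : d ⟶ c, v : c' ⟶ d')` with `u ≫ f ≫ v = g`. -/
@[ext]
structure Hom (f g : Tw C) : Type v₁ where
  u : g.left ⟶ f.left
  v : f.right ⟶ g.right
  w : u ≫ f.hom ≫ v = g.hom

instance : Category (Tw C) where
  Hom := Hom
  id f := ⟨𝟙 _, 𝟙 _, by simp⟩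
  comp {f g h} α β := ⟨β.u ≫ α.u, α.v ≫ β.v, by rw [← β.w, ← α.w]; simp⟩
  id_comp α := by apply Hom.ext <;> simp
  comp_id α := by apply Hom.ext <;> simp
  assoc α β γ := by apply Hom.ext <;> simp

/-- The object of `Tw C` given by the identity arrow `𝟙 c`. -/
def idObj (c : C) : Tw C := ⟨𝟙 c⟩

/-- The canonical morphism `𝟙_c ⟶ f` in `Tw C`, given by the pair `(𝟙_c, f)`. -/
def ιleft (f : Tw C) : idObj f.left ⟶ f := ⟨𝟙 f.left, f.hom, by simp [idObj]⟩

/-- The canonical morphism `𝟙_{c'} ⟶ f` in `Tw C`, given by the pair `(f, 𝟙_{c'})`. -/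
def ιright (f : Tw C) : idObj f.right ⟶ f := ⟨f.hom, 𝟙 f.right, by simp [idObj]⟩

end Tw

/-!
Every `f : c ⟶ c'` receives `ιleft f` from `𝟙_c`, so a section is determined by its values on
identities. Conversely, for compatible `y` put `x_f := F(ιleft f) y_c`. For `α : f ⟶ g`, both
`ιleft f ≫ α` and `ιleft g` factor through the object `α.u` (via `ιright` resp. `ιleft`) followed by
the same morphism `α.fromUObj`, so the compatibility of `y` at `α.u` makes `x` a section.
-/

namespace Tw

variable {C : Type u₁} [Category.{v₁} C]

@[simp]
lemma comp_u {f g h : Tw C} (α : f ⟶ g) (β : g ⟶ h) : (α ≫ β).u = β.u ≫ α.u := rfl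

@[simp]
lemma comp_v {f g h : Tw C} (α : f ⟶ g) (β : g ⟶ h) : (α ≫ β).v = α.v ≫ β.v := rfl

@[ext]
lemma hom_ext {f g : Tw C} {α β : f ⟶ g} (hu : α.u = β.u) (hv : α.v = β.v) : α = β :=
  Hom.ext hu hv

lemma ιleft_idObj (c : C) : ιleft (idObj c) = 𝟙 (idObj c) := by
  ext <;> rfl

abbrev Hom.uObj {f g : Tw C} (α : f ⟶ g) : Tw C := ⟨α.u⟩

def Hom.fromUObj {f g : Tw C} (α : f ⟶ g) : α.uObj ⟶ g :=
  ⟨𝟙 g.left, f.hom ≫ α.v, by simpa using α.w⟩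

lemma ιleft_comp_fromUObj {f g : Tw C} (α : f ⟶ g) : ιleft α.uObj ≫ α.fromUObj = ιleft g := by
  ext
  · simp [ιleft, Hom.fromUObj, idObj]
  · simpa [ιleft, Hom.fromUObj, idObj] using α.w

lemma ιright_comp_fromUObj {f g : Tw C} (α : f ⟶ g) :
    ιright α.uObj ≫ α.fromUObj = ιleft f ≫ α := by
  ext <;> simp [ιleft, ιright, Hom.fromUObj, idObj]

variable (F : Tw C ⥤ Type w)

lemma section_eq_map_ιleft (x : F.sections) (f : Tw C) :
    x.1 f = F.map (ιleft f) (x.1 (idObj f.left)) :=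
  (x.2 (ιleft f)).symm

lemma map_ιleft_section_eq_map_ιright (x : F.sections) (f : Tw C) :
    F.map (ιleft f) (x.1 (idObj f.left)) = F.map (ιright f) (x.1 (idObj f.right)) :=
  (x.2 (ιleft f)).trans (x.2 (ιright f)).symm

variable {F}

def sectionOfIdObj (y : (c : C) → F.obj (idObj c))
    (hy : ∀ f : Tw C, F.map (ιleft f) (y f.left) = F.map (ιright f) (y f.right)) :
    F.sections where
  val f := F.map (ιleft f) (y f.left)
  property {f g} α := by
    calc F.map α (F.map (ιleft f) (y f.left))
        = F.map α.fromUObj (F.map (ιright α.uObj) (y f.left)) := by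
          simp only [← Functor.map_comp_apply, ιright_comp_fromUObj]
      _ = F.map α.fromUObj (F.map (ιleft α.uObj) (y g.left)) := by rw [hy α.uObj]
      _ = F.map (ιleft g) (y g.left) := by
          rw [← Functor.map_comp_apply, ιleft_comp_fromUObj]

lemma sectionOfIdObj_idObj (y : (c : C) → F.obj (idObj c))
    (hy : ∀ f : Tw C, F.map (ιleft f) (y f.left) = F.map (ιright f) (y f.right)) (c : C) :
    (sectionOfIdObj y hy).1 (idObj c) = y c := by
  change F.map (ιleft (idObj c)) (y c) = y c
  rw [ιleft_idObj]
  exact F.map_id_apply _ (y c)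

end Tw

/-- For `F : Tw(C) ⥤ Type`, the map sending a section `(x_f)` of `F` to the
family `(x_{𝟙_c})_{c}` of its values on identity arrows is injective, and its
image consists exactly of those families `(y_c)` such that for every arrow
`f : c ⟶ c'`, the images of `y_c` and `y_{c'}` in `F(f)` under the structure
maps `F(𝟙_c ⟶ f)` and `F(𝟙_{c'} ⟶ f)` coincide. -/
theorem sections_of_twisted_arrows {C : Type u₁} [Category.{v₁} C]
    (F : Tw C ⥤ Type w) :
    Function.Injective (fun (x : F.sections) (c : C) => x.1 (Tw.idObj c)) ∧
    ∀ y : (c : C) → F.obj (Tw.idObj c),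
      (∃ x : F.sections, ∀ c : C, x.1 (Tw.idObj c) = y c) ↔
      ∀ f : Tw C, F.map (Tw.ιleft f) (y f.left) = F.map (Tw.ιright f) (y f.right) := by
  refine ⟨fun x x' h => ?_, fun y => ⟨?_, fun hy => ?_⟩⟩
  · ext f
    rw [Tw.section_eq_map_ιleft F x, Tw.section_eq_map_ιleft F x']
    exact congrArg _ (congrFun h f.left)
  · rintro ⟨x, hx⟩ f
    rw [← hx, ← hx]
    exact Tw.map_ιleft_section_eq_map_ιright F x f
  · exact ⟨Tw.sectionOfIdObj y hy, Tw.sectionOfIdObj_idObj y hy⟩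
end

section
/- Let L : C ⥤ D and R : D ⥤ C be an adjunction L ⊣ R between categories. If the comonad L ∘ R on D is isomorphic, merely as a functor, to the identity functor 𝟭_D, then the counit ε : R ⋙ L ⟶ 𝟭_D (i.e., the counit L(R(d)) ⟶ d of the adjunction) is a natural isomorphism; in particular R is fully faithful. -/
open CategoryTheory

/-- If for an adjunction `L ⊣ R` the comonad `R ⋙ L` (i.e. `d ↦ L (R d)`) is
isomorphic, merely as a functor, to the identity functor of `D`, then the
counit of the adjunction is a natural isomorphism; in particular `R` is fully
faithful. -/
theorem counit_isIso_of_comonad_iso_id {C D : Type*} [Category C] [Category D]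
    (L : C ⥤ D) (R : D ⥤ C) (adj : L ⊣ R) (e : R ⋙ L ≅ 𝟭 D) :
    IsIso adj.counit ∧ R.Full ∧ R.Faithful := by
  have hiso : IsIso adj.counit := by
    have hApp : ∀ d : D, IsIso (adj.counit.app d) := by
      intro d
      set φ : 𝟭 D ⟶ 𝟭 D := e.inv ≫ adj.counit with hφ
      set s : d ⟶ L.obj (R.obj d) :=
        e.inv.app d ≫ L.map (adj.unit.app (R.obj d)) ≫ L.map (R.map (e.hom.app d)) with hs
      have h1 : s ≫ adj.counit.app d = 𝟙 d := by
        have hnat := adj.counit.naturality (e.hom.app d)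
        simp only [Functor.comp_map, Functor.id_map, Functor.id_obj,
          Functor.comp_obj] at hnat
        rw [hs, Category.assoc, Category.assoc, hnat, ← Category.assoc (L.map _),
          adj.left_triangle_components]
        simp
      set u : d ⟶ d := s ≫ e.hom.app d with hu
      have hus : u ≫ e.inv.app d = s := by simp [hu]
      have huφ : u ≫ φ.app d = 𝟙 d := by
        simp only [hφ, NatTrans.comp_app, ← Category.assoc, hus, h1]
      have hφu : φ.app d ≫ u = 𝟙 d := by
        have := φ.naturality u
        simp only [Functor.id_map] at this
        rw [← this, huφ]
      have h2 : adj.counit.app d ≫ s = 𝟙 (L.obj (R.obj d)) := by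
        have h3 : e.inv.app d ≫ adj.counit.app d ≫ u = 𝟙 d := by
          simpa [hφ, Category.assoc] using hφu
        have h4 : adj.counit.app d ≫ u = e.hom.app d := by
          rw [← cancel_epi (e.inv.app d), h3]; simp
        rw [← hus, ← Category.assoc, h4]; simp
      exact ⟨s, h2, h1⟩
    exact NatIso.isIso_of_isIso_app adj.counit
  refine ⟨hiso, ?_, ?_⟩
  · exact (adj.fullyFaithfulROfIsIsoCounit).full
  · exact (adj.fullyFaithfulROfIsIsoCounit).faithful
end
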